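/- arXiv:1103.2809 — 5 statements merged into one kernel-verified Lean document; each statement's English description precedes it below -/
import Mathlib

section
/- For every real ε ∈ (0,1) and every integer m ≥ 2 there exists a finite list of integers k_1, …, k_t with t ≤ ⌈(2/ε)·ln(2m)⌉ (in particular t = O((log m)/ε)) such that for every integer b with b ≢ 0 (mod m), (1/t²)·(Σ_{i=1}^t cos(2π k_i b / m))² < ε. -/
/-!
Probabilistic method: pick `k_1, …, k_t` independently and uniformly from `{0, …, m - 1}`.
For fixed `b ≢ 0 (mod m)` the summands `cos (2π k_i b / m)` are independent, bounded by `1`,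
and have mean zero (the `m`-th roots of unity `e^{2πi jb/m}` sum to zero), so by Hoeffding's
inequality `|∑ cos (2π k_i b / m)| ≥ √ε t` with probability at most `2 e^{-ε t / 2}`, which is
at most `1 / m` once `t ≥ (2/ε) log (2m)`. A union bound over the `m - 1` nonzero residues
leaves a good choice.
-/

open Real Finset

section Hoeffding

variable {α : Type*} [Fintype α] {g : α → ℝ}

lemma sum_exp_mul_le_card_mul_exp (hg : ∀ a, |g a| ≤ 1) (hsum : ∑ a, g a = 0) (l : ℝ) :
    ∑ a, exp (l * g a) ≤ Fintype.card α * exp (l ^ 2 / 2) :=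
  calc ∑ a, exp (l * g a) ≤ ∑ a, (cosh l + g a * sinh l) :=
        sum_le_sum fun a _ => by rw [mul_comm]; exact exp_mul_le_cosh_add_mul_sinh (hg a) l
    _ = Fintype.card α * cosh l := by
        rw [sum_add_distrib, ← sum_mul, hsum, sum_const, card_univ, nsmul_eq_mul]; ring
    _ ≤ Fintype.card α * exp (l ^ 2 / 2) := by gcongr; exact cosh_le_exp_half_sq l

lemma sum_exp_mul_sum_le (hg : ∀ a, |g a| ≤ 1) (hsum : ∑ a, g a = 0) (l : ℝ) (t : ℕ) :
    ∑ k : Fin t → α, exp (l * ∑ i, g (k i)) ≤ (Fintype.card α * exp (l ^ 2 / 2)) ^ t :=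
  calc ∑ k : Fin t → α, exp (l * ∑ i, g (k i)) = (∑ a, exp (l * g a)) ^ t := by
        simp only [Fintype.sum_pow, mul_sum, exp_sum]
    _ ≤ _ := by
        gcongr
        exact sum_exp_mul_le_card_mul_exp hg hsum l

lemma card_filter_le_sum_le (hg : ∀ a, |g a| ≤ 1) (hsum : ∑ a, g a = 0) {l : ℝ}
    (hl : 0 ≤ l) (s : ℝ) (t : ℕ) :
    (#{k : Fin t → α | s ≤ ∑ i, g (k i)} : ℝ) ≤
      exp (-(l * s)) * (Fintype.card α * exp (l ^ 2 / 2)) ^ t := by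
  have markov : (#{k : Fin t → α | s ≤ ∑ i, g (k i)} : ℝ) * exp (l * s) ≤
      ∑ k : Fin t → α, exp (l * ∑ i, g (k i)) :=
    calc _ ≤ ∑ k ∈ {k : Fin t → α | s ≤ ∑ i, g (k i)}, exp (l * ∑ i, g (k i)) := by
          rw [← nsmul_eq_mul]
          exact card_nsmul_le_sum _ _ _ fun k hk =>
            exp_le_exp.2 (mul_le_mul_of_nonneg_left (mem_filter.1 hk).2 hl)
      _ ≤ _ := sum_le_sum_of_subset_of_nonneg (subset_univ _) fun _ _ _ => (exp_pos _).le
  rw [exp_neg, inv_mul_eq_div, le_div_iff₀ (exp_pos _)]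
  exact markov.trans (sum_exp_mul_sum_le hg hsum l t)

theorem card_filter_le_abs_sum_le (hg : ∀ a, |g a| ≤ 1) (hsum : ∑ a, g a = 0) {s : ℝ}
    (hs : 0 ≤ s) (t : ℕ) :
    (#{k : Fin t → α | s ≤ |∑ i, g (k i)|} : ℝ) ≤
      2 * Fintype.card α ^ t * exp (-(s ^ 2 / (2 * t))) := by
  have hl : 0 ≤ s / t := by positivity
  have optimal : exp (-(s / t * s)) * (Fintype.card α * exp ((s / t) ^ 2 / 2)) ^ t =
      Fintype.card α ^ t * exp (-(s ^ 2 / (2 * t))) := by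
    rw [mul_pow, ← exp_nat_mul, mul_left_comm, ← exp_add]
    rcases eq_or_ne (t : ℝ) 0 with ht | ht
    · simp [ht]
    · congr 2; field_simp; ring
  have hsplit : (#{k : Fin t → α | s ≤ |∑ i, g (k i)|} : ℝ) ≤
      #{k : Fin t → α | s ≤ ∑ i, g (k i)} + #{k : Fin t → α | s ≤ ∑ i, -g (k i)} := by
    classical
    simp only [le_abs, sum_neg_distrib]
    rw [filter_or]
    exact_mod_cast card_union_le _ _
  have hupper := card_filter_le_sum_le hg hsum hl s t
  have hlower := card_filter_le_sum_le (g := fun a => -g a) (by simpa using hg)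
    (by rw [sum_neg_distrib, hsum, neg_zero]) hl s t
  rw [optimal] at hupper hlower
  linarith

end Hoeffding

lemma exists_forall_notMem_of_sum_card_lt {β γ : Type*} [Fintype β] {B : Finset γ}
    {bad : γ → Finset β} (h : ∑ b ∈ B, #(bad b) < Fintype.card β) :
    ∃ x, ∀ b ∈ B, x ∉ bad b := by
  classical
  by_contra! hcover
  have : (univ : Finset β) ⊆ B.biUnion bad := fun x _ => by simpa using hcover x
  exact ((card_le_card this).trans card_biUnion_le).not_gt (by simpa using h)

lemma sum_cos_two_pi_mul_div_eq_zero {m : ℕ} {b : ℤ} (hb : ¬ (m : ℤ) ∣ b) :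
    ∑ j : Fin m, cos (2 * π * (j : ℕ) * b / m) = 0 := by
  rcases eq_or_ne m 0 with rfl | hm
  · simp
  set z := Complex.exp (2 * π * Complex.I * b / m)
  have hz : z ≠ 1 := by
    rw [Ne, Complex.exp_eq_one_iff]
    rintro ⟨n, hn⟩
    refine hb ⟨n, ?_⟩
    have : (b : ℂ) = m * n := by
      field_simp at hn
      linear_combination hn
    exact_mod_cast this
  have hzm : z ^ m = 1 := by
    rw [← Complex.exp_nat_mul, ← Complex.exp_int_mul_two_pi_mul_I b]
    congr 1
    field_simp
  have hre : ∀ j : ℕ, (z ^ j).re = cos (2 * π * j * b / m) := fun j => by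
    rw [← Complex.exp_nat_mul, ← Complex.exp_ofReal_mul_I_re (2 * π * j * b / m)]
    push_cast
    ring_nf
  have := congrArg Complex.re (geom_sum_eq hz m)
  rw [hzm, sub_self, zero_div, Complex.re_sum, ← Fin.sum_univ_eq_sum_range] at this
  simpa [hre] using this

lemma cos_two_pi_mul_div_emod (k b : ℤ) (m : ℕ) :
    cos (2 * π * k * b / m) = cos (2 * π * k * (b % m : ℤ) / m) := by
  rcases eq_or_ne m 0 with rfl | hm
  · simp
  have hb : (b : ℝ) = (b % m : ℤ) + m * (b / m : ℤ) := by
    exact_mod_cast (Int.emod_add_mul_ediv b m).symm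
  rw [hb, show 2 * π * k * ((b % m : ℤ) + m * (b / m : ℤ)) / m =
    2 * π * k * (b % m : ℤ) / m + (k * (b / m) : ℤ) * (2 * π) by push_cast; field_simp]
  exact cos_add_int_mul_two_pi _ _

theorem exists_forall_abs_sum_cos_lt {m t : ℕ} (hm : 0 < m) {s : ℝ} (hs : 0 ≤ s)
    (h : 2 * (m - 1) * exp (-(s ^ 2 / (2 * t))) < 1) :
    ∃ k : Fin t → ℤ, ∀ b : ℤ, ¬ (m : ℤ) ∣ b → |∑ i, cos (2 * π * (k i : ℝ) * b / m)| < s := by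
  -- `cos (2π k b / m)` only depends on `b mod m`, so only the residues `1, …, m - 1` matter.
  let bad (b : ℤ) : Finset (Fin t → Fin m) :=
    {k | s ≤ |∑ i, cos (2 * π * (k i : ℕ) * b / m)|}
  have hbad : ∀ b ∈ Ico (1 : ℤ) m,
      (#(bad b) : ℝ) ≤ 2 * m ^ t * exp (-(s ^ 2 / (2 * t))) := by
    intro b hb
    obtain ⟨hb1, hbm⟩ := mem_Ico.1 hb
    have hdvd : ¬ (m : ℤ) ∣ b := fun hdvd => (Int.le_of_dvd (by omega) hdvd).not_gt hbm
    simpa using card_filter_le_abs_sum_le (fun j => abs_cos_le_one _)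
      (sum_cos_two_pi_mul_div_eq_zero hdvd) hs t
  have hcount : ∑ b ∈ Ico (1 : ℤ) m, #(bad b) < Fintype.card (Fin t → Fin m) := by
    have hcard : (#(Ico (1 : ℤ) m) : ℝ) = m - 1 := by
      rw [Int.card_Ico, show ((m : ℤ) - 1).toNat = m - 1 by omega, Nat.cast_sub hm]
      simp
    have hunion := sum_le_sum hbad
    rw [sum_const, nsmul_eq_mul, hcard] at hunion
    have hpow : (0 : ℝ) < m ^ t := by positivity
    have hlt : ∑ b ∈ Ico (1 : ℤ) m, (#(bad b) : ℝ) < m ^ t := hunion.trans_lt (by nlinarith)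
    simp only [Fintype.card_fun, Fintype.card_fin]
    exact_mod_cast hlt
  obtain ⟨k, hk⟩ := exists_forall_notMem_of_sum_card_lt hcount
  refine ⟨fun i => (k i : ℕ), fun b hb => ?_⟩
  have hr : b % m ∈ Ico (1 : ℤ) m := by
    rw [mem_Ico]
    have := Int.emod_nonneg b (by omega : (m : ℤ) ≠ 0)
    have := Int.emod_lt_of_pos b (by omega : (0 : ℤ) < m)
    have : b % m ≠ 0 := fun h => hb (Int.dvd_of_emod_eq_zero h)
    omega
  beta_reduce
  rw [sum_congr rfl fun i _ => cos_two_pi_mul_div_emod (k i : ℕ) b m]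
  simpa [bad] using hk _ hr

theorem exists_good_set_general (ε : ℝ) (hε0 : 0 < ε) (m : ℕ) (hm : 2 ≤ m) :
    ∃ t : ℕ, 0 < t ∧ t ≤ ⌈(2 / ε) * Real.log (2 * (m : ℝ))⌉₊ ∧
      ∃ k : Fin t → ℤ,
        ∀ b : ℤ, ¬ ((m : ℤ) ∣ b) →
          (1 / (t : ℝ) ^ 2) *
            (∑ i, Real.cos (2 * Real.pi * (k i : ℝ) * (b : ℝ) / (m : ℝ))) ^ 2 < ε := by
  have hm2 : (2 : ℝ) ≤ m := by exact_mod_cast hm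
  set t := ⌈(2 / ε) * log (2 * (m : ℝ))⌉₊
  have hlog : log (2 * m) ≤ ε * t / 2 :=
    calc log (2 * m) = ε * ((2 / ε) * log (2 * m)) / 2 := by field_simp
      _ ≤ ε * t / 2 := by gcongr; exact Nat.le_ceil _
  have ht : 0 < t := Nat.ceil_pos.2 <| by
    have := log_pos (by linarith : (1 : ℝ) < 2 * m)
    positivity
  have hfew : 2 * (m - 1) * exp (-((√ε * t) ^ 2 / (2 * t))) < 1 := by
    have : (√ε * t) ^ 2 / (2 * t) = ε * t / 2 := by
      rw [mul_pow, sq_sqrt hε0.le]; field_simp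
    calc 2 * (m - 1) * exp (-((√ε * t) ^ 2 / (2 * t)))
      _ ≤ 2 * (m - 1) * exp (-log (2 * m)) := by rw [this]; gcongr; linarith
      _ = (m - 1) / m := by rw [exp_neg, exp_log (by positivity)]; field_simp
      _ < 1 := by rw [div_lt_one (by positivity)]; linarith
  obtain ⟨k, hk⟩ := exists_forall_abs_sum_cos_lt (by omega) (by positivity) hfew
  refine ⟨t, ht, le_rfl, k, fun b hb => ?_⟩
  rw [one_div, inv_mul_lt_iff₀ (by positivity), ← sq_abs]
  calc _ < (√ε * t) ^ 2 := pow_lt_pow_left₀ (hk b hb) (abs_nonneg _) two_ne_zero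
    _ = t ^ 2 * ε := by rw [mul_pow, sq_sqrt hε0.le, mul_comm]

/-- For every `ε ∈ (0,1)` and integer `m ≥ 2`, there is a list of integers
`k_1, …, k_t` with `t ≤ ⌈(2/ε)·ln(2m)⌉` that is "ε-good" for `m`: for every integer
`b` with `b ≢ 0 (mod m)`, `(1/t²)·(Σ_{i=1}^t cos(2π k_i b / m))² < ε`. -/
theorem exists_good_set (ε : ℝ) (hε0 : 0 < ε) (hε1 : ε < 1) (m : ℕ) (hm : 2 ≤ m) :
    ∃ t : ℕ, 0 < t ∧ t ≤ ⌈(2 / ε) * Real.log (2 * (m : ℝ))⌉₊ ∧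
      ∃ k : Fin t → ℤ,
        ∀ b : ℤ, ¬ ((m : ℤ) ∣ b) →
          (1 / (t : ℝ) ^ 2) *
            (∑ i, Real.cos (2 * Real.pi * (k i : ℝ) * (b : ℝ) / (m : ℝ))) ^ 2 < ε :=
  exists_good_set_general ε hε0 m hm
end

section
/- Let ε ∈ (0,1), let m ≥ 2 be an integer, let f : {0,1}^n → {0,1} be a Boolean function, and let χ = {g_1, …, g_l} be a linear characteristic of f over Z_m. Then there exist t ≤ ⌈(2/ε)·ln(2m)⌉ and integers k_1, …, k_t such that the function P(σ) = (1/t)·Σ_{i=1}^t Π_{j=1}^l cos²(π k_i g_j(σ) / m) satisfies: P(σ) = 1 for every σ with f(σ) = 1, and P(σ) ≤ 1/2 + √ε/2 for every σ with f(σ) = 0. (P(σ) is the acceptance probability of the generalized quantum fingerprinting read-once branching program for f.) -/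
/-- The value of the linear polynomial `g(x) = c₀ + c₁x₁ + … + cₙxₙ` at a Boolean input. -/
def linEval {n : ℕ} (c0 : ℤ) (c : Fin n → ℤ) (σ : Fin n → Bool) : ℤ :=
  c0 + ∑ i, c i * (if σ i then 1 else 0)

/-!
If some `g_j(σ) ≢ 0 (mod m)`, bounding the other factors by `1` and using
`cos² x = (1 + cos 2x) / 2` gives `P(σ) ≤ 1/2 + (1 / 2t) ∑ᵢ cos (2π kᵢ b / m)` with
`b ≡ g_j(σ) (mod m)`, `b ≠ 0`, while `P(σ) = 1` when all `g_j(σ) ≡ 0`. So it suffices to choose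
`k₁, …, k_t` with `∑ᵢ cos (2π kᵢ b / m) ≤ t √ε` for all nonzero residues `b` simultaneously.
For `k` uniform in `ℤ_mᵗ` the terms are independent, bounded by `1` and of mean zero (a geometric
sum of `m`-th roots of unity), so the Chernoff–Hoeffding bound makes a fixed `b` fail with
probability at most `exp (-tε/2) ≤ 1 / 2m`, and a union bound over the `m - 1` residues leaves a
good choice. The probabilistic argument is carried out by counting.
-/

open Real Finset

section Hoeffding

variable {X : Type*} [Fintype X]

lemma sum_exp_mul_le_card_mul_exp_s3 (φ : X → ℝ) (hφ : ∀ x, |φ x| ≤ 1) (hmean : ∑ x, φ x ≤ 0)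
    {a : ℝ} (ha : 0 ≤ a) :
    ∑ x, exp (φ x * a) ≤ Fintype.card X * exp (a ^ 2 / 2) :=
  calc ∑ x, exp (φ x * a) ≤ ∑ x, (cosh a + φ x * sinh a) :=
        sum_le_sum fun x _ => exp_mul_le_cosh_add_mul_sinh (hφ x) a
    _ = Fintype.card X * cosh a + (∑ x, φ x) * sinh a := by
        rw [sum_add_distrib, ← sum_mul, sum_const, card_univ, nsmul_eq_mul]
    _ ≤ Fintype.card X * cosh a :=
        add_le_of_nonpos_right (mul_nonpos_of_nonpos_of_nonneg hmean (sinh_nonneg_iff.mpr ha))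
    _ ≤ Fintype.card X * exp (a ^ 2 / 2) := by gcongr; exact cosh_le_exp_half_sq a

lemma card_filter_lt_sum_le (φ : X → ℝ) (hφ : ∀ x, |φ x| ≤ 1) (hmean : ∑ x, φ x ≤ 0)
    (t : ℕ) {δ : ℝ} (hδ : 0 ≤ δ) :
    (#{K : Fin t → X | t * δ < ∑ i, φ (K i)} : ℝ) ≤
      Fintype.card X ^ t * exp (-(t * δ ^ 2 / 2)) := by
  set bad : Finset (Fin t → X) := {K | t * δ < ∑ i, φ (K i)}
  have markov : (#bad : ℝ) * exp (t * δ ^ 2) ≤ ∑ K : Fin t → X, ∏ i, exp (φ (K i) * δ) :=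
    calc (#bad : ℝ) * exp (t * δ ^ 2) = ∑ K ∈ bad, exp (t * δ ^ 2) := by
          rw [sum_const, nsmul_eq_mul]
      _ ≤ ∑ K ∈ bad, ∏ i, exp (φ (K i) * δ) := sum_le_sum fun K hK => by
          rw [← exp_sum, ← sum_mul, exp_le_exp]
          have := (mem_filter.mp hK).2
          nlinarith
      _ ≤ _ := sum_le_sum_of_subset_of_nonneg (subset_univ _) fun _ _ _ => by positivity
  have moment : ∑ K : Fin t → X, ∏ i, exp (φ (K i) * δ) ≤
      Fintype.card X ^ t * exp (t * δ ^ 2 / 2) := by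
    calc _ = (∑ x, exp (φ x * δ)) ^ t := (Fintype.sum_pow _ t).symm
      _ ≤ (Fintype.card X * exp (δ ^ 2 / 2)) ^ t :=
          pow_le_pow_left₀ (by positivity) (sum_exp_mul_le_card_mul_exp_s3 φ hφ hmean hδ) t
      _ = _ := by rw [mul_pow, ← exp_nat_mul, mul_div_assoc]
  rw [show exp (-(t * δ ^ 2 / 2)) = exp (t * δ ^ 2 / 2) / exp (t * δ ^ 2) by
    rw [← exp_sub]; ring_nf, ← mul_div_assoc, le_div_iff₀ (exp_pos _)]
  exact markov.trans moment

theorem exists_forall_sum_le_of_card_lt {ι : Type*} [Nonempty X] (s : Finset ι) (φ : ι → X → ℝ)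
    (hφ : ∀ b ∈ s, ∀ x, |φ b x| ≤ 1) (hmean : ∀ b ∈ s, ∑ x, φ b x ≤ 0) {t : ℕ} {δ : ℝ}
    (hδ : 0 ≤ δ) (hs : (#s : ℝ) < exp (t * δ ^ 2 / 2)) :
    ∃ K : Fin t → X, ∀ b ∈ s, ∑ i, φ b (K i) ≤ t * δ := by
  classical
  set bad := s.biUnion fun b => ({K : Fin t → X | t * δ < ∑ i, φ b (K i)} : Finset _)
  have hbad : #bad < #(univ : Finset (Fin t → X)) := by
    have hunion : (#bad : ℝ) ≤ #s * (Fintype.card X ^ t * exp (-(t * δ ^ 2 / 2))) :=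
      calc (#bad : ℝ) ≤ ∑ b ∈ s, (#{K : Fin t → X | t * δ < ∑ i, φ b (K i)} : ℝ) := by
            exact_mod_cast card_biUnion_le
        _ ≤ ∑ b ∈ s, (Fintype.card X ^ t * exp (-(t * δ ^ 2 / 2)) : ℝ) :=
            sum_le_sum fun b hb => card_filter_lt_sum_le _ (hφ b hb) (hmean b hb) t hδ
        _ = _ := by rw [sum_const, nsmul_eq_mul]
    have hs' : (#s : ℝ) * exp (-(t * δ ^ 2 / 2)) < 1 := by
      rwa [exp_neg, ← div_eq_mul_inv, div_lt_one (exp_pos _)]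
    have hpos : (0 : ℝ) < Fintype.card X ^ t := by positivity
    have : (#bad : ℝ) < Fintype.card X ^ t := hunion.trans_lt (by nlinarith)
    rw [card_univ, Fintype.card_fun, Fintype.card_fin]
    exact_mod_cast this
  obtain ⟨K, -, hK⟩ := exists_mem_notMem_of_card_lt_card hbad
  exact ⟨K, fun b hb => not_lt.mp fun h => hK (mem_biUnion.mpr ⟨b, hb, by simpa using h⟩)⟩

end Hoeffding

lemma sum_range_cos_two_pi_mul_div_eq_zero {m : ℕ} {b : ℤ} (hb : ¬ (m : ℤ) ∣ b) :
    ∑ k ∈ range m, cos (2 * π * k * b / m) = 0 := by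
  rcases Nat.eq_zero_or_pos m with rfl | hm
  · simp
  have hm' : (m : ℂ) ≠ 0 := by exact_mod_cast hm.ne'
  set ζ : ℂ := Complex.exp (2 * π * Complex.I * b / m)
  have hζm : ζ ^ m = 1 := by
    rw [← Complex.exp_nat_mul, Complex.exp_eq_one_iff]
    exact ⟨b, by field_simp⟩
  have hζ1 : ζ ≠ 1 := by
    rw [Ne, Complex.exp_eq_one_iff]
    rintro ⟨d, hd⟩
    have hπ : (2 * π * Complex.I : ℂ) ≠ 0 := by simp [pi_ne_zero]
    rw [div_eq_iff hm'] at hd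
    have hbd : (b : ℂ) = (m * d : ℤ) := mul_left_cancel₀ hπ (by push_cast; linear_combination hd)
    exact hb ⟨d, by exact_mod_cast hbd⟩
  have hre (k : ℕ) : (ζ ^ k).re = cos (2 * π * k * b / m) := by
    rw [← Complex.exp_nat_mul, ← Complex.exp_ofReal_mul_I_re]
    push_cast
    ring_nf
  simp_rw [← hre, ← Complex.re_sum, geom_sum_eq hζ1, hζm, sub_self, zero_div, Complex.zero_re]

lemma cos_two_pi_mul_emod (k b : ℤ) (m : ℕ) :
    cos (2 * π * k * (b % m : ℤ) / m) = cos (2 * π * k * b / m) := by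
  rcases Nat.eq_zero_or_pos m with rfl | hm
  · simp
  rw [Int.emod_def, ← cos_sub_int_mul_two_pi (2 * π * k * b / m) (k * (b / m))]
  congr 1
  push_cast
  field_simp

theorem exists_sum_cos_two_pi_mul_div_le {m t : ℕ} {δ : ℝ} (hm : 0 < m) (hδ : 0 ≤ δ)
    (h : (m : ℝ) < exp (t * δ ^ 2 / 2)) :
    ∃ k : Fin t → ℤ, ∀ b : ℤ, ¬ (m : ℤ) ∣ b → ∑ i, cos (2 * π * k i * b / m) ≤ t * δ := by
  have : NeZero m := ⟨hm.ne'⟩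
  have hcard : (#(Ioo (0 : ℤ) m) : ℝ) ≤ m := by
    rw [Int.card_Ioo]; exact_mod_cast (by omega : ((m : ℤ) - 0 - 1).toNat ≤ m)
  obtain ⟨K, hK⟩ := exists_forall_sum_le_of_card_lt (X := Fin m) (Ioo (0 : ℤ) m)
    (fun b x => cos (2 * π * (x : ℕ) * b / m)) (fun _ _ _ => abs_cos_le_one _)
    (fun b hb => by
      rw [Fin.sum_univ_eq_sum_range (fun k : ℕ => cos (2 * π * k * b / m)),
        sum_range_cos_two_pi_mul_div_eq_zero]
      exact fun hdvd => (Int.le_of_dvd (mem_Ioo.mp hb).1 hdvd).not_gt (mem_Ioo.mp hb).2)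
    hδ (hcard.trans_lt h)
  refine ⟨fun i => K i, fun b hb => ?_⟩
  have hr : b % m ∈ Ioo (0 : ℤ) m :=
    mem_Ioo.mpr ⟨lt_of_le_of_ne (Int.emod_nonneg b (by omega))
      (fun h => hb (Int.dvd_of_emod_eq_zero h.symm)), Int.emod_lt_of_pos b (by omega)⟩
  simp_rw [← cos_two_pi_mul_emod _ b]
  exact_mod_cast hK _ hr

/-- The acceptance probability `P(σ)` of the fingerprinting program with parameters `k`, when
`g j` is the value `g_j(σ)` of the `j`-th polynomial of the characteristic. -/
noncomputable def fingerprintAcceptance {t l : ℕ} (m : ℕ) (k : Fin t → ℤ) (g : Fin l → ℤ) : ℝ :=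
  (1 / (t : ℝ)) * ∑ i, ∏ j, (cos (π * (k i : ℝ) * (g j : ℝ) / m)) ^ 2

lemma cos_sq_pi_mul_div (k g : ℤ) (m : ℕ) :
    cos (π * k * g / m) ^ 2 = 1 / 2 + cos (2 * π * k * g / m) / 2 := by
  rw [cos_sq]; ring_nf

section fingerprintAcceptance

variable {t l m : ℕ} {k : Fin t → ℤ} {g : Fin l → ℤ}

lemma fingerprintAcceptance_eq_one (ht : 0 < t) (hg : ∀ j, (m : ℤ) ∣ g j) :
    fingerprintAcceptance m k g = 1 := by
  have hterm (i : Fin t) (j : Fin l) : cos (π * k i * g j / m) ^ 2 = 1 := by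
    rw [cos_sq_pi_mul_div, ← cos_two_pi_mul_emod, Int.emod_eq_zero_of_dvd (hg j)]
    norm_num
  simp only [fingerprintAcceptance, hterm, prod_const_one, sum_const, card_univ,
    Fintype.card_fin, nsmul_eq_mul, mul_one]
  field_simp

lemma fingerprintAcceptance_le (ht : 0 < t) (j : Fin l) {δ : ℝ}
    (h : ∑ i, cos (2 * π * k i * g j / m) ≤ t * δ) :
    fingerprintAcceptance m k g ≤ 1 / 2 + δ / 2 := by
  have hterm (i : Fin t) :
      ∏ j', cos (π * k i * g j' / m) ^ 2 ≤ 1 / 2 + cos (2 * π * k i * g j / m) / 2 := by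
    rw [← cos_sq_pi_mul_div, ← mul_prod_erase _ _ (mem_univ j)]
    exact mul_le_of_le_one_right (sq_nonneg _)
      (prod_le_one (fun _ _ => sq_nonneg _) fun _ _ => cos_sq_le_one _)
  have htR : (0 : ℝ) < t := by exact_mod_cast ht
  calc fingerprintAcceptance m k g ≤ 1 / t * ∑ i, (1 / 2 + cos (2 * π * k i * g j / m) / 2) :=
        mul_le_mul_of_nonneg_left (sum_le_sum fun i _ => hterm i) (by positivity)
    _ = 1 / t * (t / 2 + (∑ i, cos (2 * π * k i * g j / m)) / 2) := by
        rw [sum_add_distrib, sum_div, sum_const, card_univ, Fintype.card_fin, nsmul_eq_mul]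
        ring
    _ = 1 / 2 + (∑ i, cos (2 * π * k i * g j / m)) / t / 2 := by
        generalize ∑ i, cos (2 * π * k i * g j / m) = S
        field_simp
    _ ≤ 1 / 2 + δ / 2 := by
        gcongr
        rw [div_le_iff₀ htR]
        linarith

end fingerprintAcceptance

theorem linear_characteristic_fingerprinting_general (n l : ℕ) (ε : ℝ) (hε0 : 0 < ε)
    (m : ℕ) (hm : 2 ≤ m) (f : (Fin n → Bool) → Bool)
    (c0 : Fin l → ℤ) (c : Fin l → Fin n → ℤ)
    (hchar : ∀ σ : Fin n → Bool,
      f σ = true ↔ ∀ j : Fin l, (m : ℤ) ∣ linEval (c0 j) (c j) σ) :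
    ∃ t : ℕ, 0 < t ∧ t ≤ ⌈(2 / ε) * Real.log (2 * (m : ℝ))⌉₊ ∧
      ∃ k : Fin t → ℤ,
        ∀ σ : Fin n → Bool,
          (f σ = true →
            (1 / (t : ℝ)) *
              ∑ i, ∏ j, (Real.cos (Real.pi * (k i : ℝ) *
                ((linEval (c0 j) (c j) σ : ℤ) : ℝ) / (m : ℝ))) ^ 2 = 1) ∧
          (f σ = false →
            (1 / (t : ℝ)) *
              ∑ i, ∏ j, (Real.cos (Real.pi * (k i : ℝ) *
                ((linEval (c0 j) (c j) σ : ℤ) : ℝ) / (m : ℝ))) ^ 2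
              ≤ 1 / 2 + Real.sqrt ε / 2) := by
  set t := ⌈(2 / ε) * log (2 * (m : ℝ))⌉₊
  have hm' : (2 : ℝ) ≤ m := by exact_mod_cast hm
  have ht : 0 < t := Nat.ceil_pos.mpr (mul_pos (by positivity) (log_pos (by linarith)))
  have hexp : (m : ℝ) < exp (t * √ε ^ 2 / 2) := by
    have hceil : (2 / ε) * log (2 * (m : ℝ)) ≤ t := Nat.le_ceil _
    rw [div_mul_eq_mul_div, div_le_iff₀ hε0] at hceil
    calc (m : ℝ) < exp (log (2 * m)) := by rw [exp_log (by positivity)]; linarith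
      _ ≤ exp (t * √ε ^ 2 / 2) := by rw [sq_sqrt hε0.le, exp_le_exp]; linarith
  obtain ⟨k, hk⟩ := exists_sum_cos_two_pi_mul_div_le (by omega) (sqrt_nonneg ε) hexp
  refine ⟨t, ht, le_rfl, k, fun σ => ⟨fun hf => ?_, fun hf => ?_⟩⟩
  · exact fingerprintAcceptance_eq_one (g := fun j => linEval (c0 j) (c j) σ) ht
      ((hchar σ).mp hf)
  · obtain ⟨j, hj⟩ : ∃ j, ¬ (m : ℤ) ∣ linEval (c0 j) (c j) σ := by
      simpa [hf] using hchar σ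
    exact fingerprintAcceptance_le (g := fun j => linEval (c0 j) (c j) σ) ht j (hk _ hj)

/-- If a Boolean function `f` has a linear characteristic `χ = {g₁, …, g_l}` over `ℤ_m`
(each `g_j` linear, and `f(σ) = 1` iff all `g_j(σ) ≡ 0 (mod m)`), then the generalized
quantum fingerprinting program accepts every `σ ∈ f⁻¹(1)` with probability `1` and every
`σ ∈ f⁻¹(0)` with probability `≤ 1/2 + √ε/2`, using `t ≤ ⌈(2/ε)·ln(2m)⌉` parameters. -/
theorem linear_characteristic_fingerprinting (n l : ℕ) (ε : ℝ) (hε0 : 0 < ε)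
    (hε1 : ε < 1) (m : ℕ) (hm : 2 ≤ m) (f : (Fin n → Bool) → Bool)
    (c0 : Fin l → ℤ) (c : Fin l → Fin n → ℤ)
    (hchar : ∀ σ : Fin n → Bool,
      f σ = true ↔ ∀ j : Fin l, (m : ℤ) ∣ linEval (c0 j) (c j) σ) :
    ∃ t : ℕ, 0 < t ∧ t ≤ ⌈(2 / ε) * Real.log (2 * (m : ℝ))⌉₊ ∧
      ∃ k : Fin t → ℤ,
        ∀ σ : Fin n → Bool,
          (f σ = true →
            (1 / (t : ℝ)) *
              ∑ i, ∏ j, (Real.cos (Real.pi * (k i : ℝ) *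
                ((linEval (c0 j) (c j) σ : ℤ) : ℝ) / (m : ℝ))) ^ 2 = 1) ∧
          (f σ = false →
            (1 / (t : ℝ)) *
              ∑ i, ∏ j, (Real.cos (Real.pi * (k i : ℝ) *
                ((linEval (c0 j) (c j) σ : ℤ) : ℝ) / (m : ℝ))) ^ 2
              ≤ 1 / 2 + Real.sqrt ε / 2) :=
  linear_characteristic_fingerprinting_general n l ε hε0 m hm f c0 c hchar
end

section
/- For all x ∈ {0,1}^n with n ≥ 2: Σ_{i=1}^{⌊n/2⌋} x_i·2^{i-1} − Σ_{i=⌈n/2⌉}^{n} x_i·2^{n-i} ≡ 0 (mod 2^{⌊n/2⌋}) if and only if x_i = x_{n+1-i} for all i ∈ {1,…,n}. (That is, this linear polynomial is a characteristic polynomial of the function Palindrome_n over Z_{2^{⌊n/2⌋}}.) -/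
/-!
Write `m = ⌊n/2⌋` and pair the variable at distance `k` from the left end with the one at distance
`k` from the right end: the polynomial becomes `∑_{k<m} (x_{k+1} - x_{n-k}) 2^k - x_{n-m} 2^m`.
Modulo `2^m` this is a binary expansion of length `m` with digits in `{-1, 0, 1}`, which is
divisible by `2^m` only if every digit vanishes: dividing out the powers of two below the lowest
nonzero digit leaves an odd number.
-/

theorem two_pow_dvd_sum_signed_digits_iff {m : ℕ} {c : ℕ → ℤ} (hc : ∀ j < m, |c j| ≤ 1) :
    (2 : ℤ) ^ m ∣ ∑ j ∈ Finset.range m, c j * 2 ^ j ↔ ∀ j < m, c j = 0 := by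
  induction m generalizing c with
  | zero => simp
  | succ m ih =>
    have hsum : ∑ j ∈ Finset.range (m + 1), c j * 2 ^ j
        = 2 * ∑ j ∈ Finset.range m, c (j + 1) * 2 ^ j + c 0 := by
      rw [Finset.sum_range_succ', Finset.mul_sum]
      simp only [pow_succ, pow_zero, mul_one]
      congr 1
      exact Finset.sum_congr rfl fun j _ => by ring
    have ih' := ih (c := fun j => c (j + 1)) fun j hj => hc (j + 1) (by omega)
    rw [hsum]
    constructor
    · intro h
      have hc0 : c 0 = 0 := by
        have h2 : (2 : ℤ) ∣ c 0 := by
          rw [← dvd_add_right (dvd_mul_right 2 _)]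
          exact (dvd_pow_self 2 m.succ_ne_zero).trans h
        have := abs_le.mp (hc 0 m.succ_pos)
        omega
      rw [hc0, add_zero, pow_succ', mul_dvd_mul_iff_left two_ne_zero, ih'] at h
      rintro (_ | j) hj
      · exact hc0
      · exact h j (by omega)
    · intro h
      rw [h 0 m.succ_pos, add_zero, pow_succ', mul_dvd_mul_iff_left two_ne_zero, ih']
      exact fun j hj => h (j + 1) (by omega)

theorem sum_Icc_one_mul_two_pow_sub_one {R : Type*} [CommSemiring R] (f : ℕ → R) (m : ℕ) :
    ∑ i ∈ Finset.Icc 1 m, f i * 2 ^ (i - 1) = ∑ k ∈ Finset.range m, f (k + 1) * 2 ^ k := by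
  rw [← Finset.Ico_add_one_right_eq_Icc, Finset.sum_Ico_eq_sum_range, Nat.add_sub_cancel]
  exact Finset.sum_congr rfl fun k _ => by rw [Nat.add_comm 1 k, Nat.add_sub_cancel]

theorem sum_Icc_sub_mul_two_pow_sub {R : Type*} [CommSemiring R] (f : ℕ → R) {m n : ℕ}
    (hmn : m ≤ n) :
    ∑ i ∈ Finset.Icc (n - m) n, f i * 2 ^ (n - i) = ∑ k ∈ Finset.range (m + 1), f (n - k) * 2 ^ k :=
  Finset.sum_nbij' (n - ·) (n - ·) (by simp; omega) (by simp; omega)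
    (by simp; omega) (by simp; omega) (by simp; intro i _ _; rw [Nat.sub_sub_self (by omega)])

theorem forall_lt_half_eq_iff_palindrome {α : Type*} (x : ℕ → α) (n : ℕ) :
    (∀ k < n / 2, x (k + 1) = x (n - k)) ↔ ∀ i ∈ Finset.Icc 1 n, x i = x (n + 1 - i) := by
  constructor
  · intro h i hi
    rw [Finset.mem_Icc] at hi
    rcases lt_trichotomy (2 * i) (n + 1) with hlt | heq | hgt
    · simpa [show i - 1 + 1 = i by omega, show n - (i - 1) = n + 1 - i by omega]
        using h (i - 1) (by omega)
    · rw [show n + 1 - i = i by omega]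
    · simpa [show n - i + 1 = n + 1 - i by omega, show n - (n - i) = i by omega]
        using (h (n - i) (by omega)).symm
  · intro h k hk
    simpa [show n + 1 - (k + 1) = n - k by omega] using h (k + 1) (by simp; omega)

theorem indicator_sub_eq_zero_iff (a b : Bool) :
    ((if a then 1 else 0) - (if b then 1 else 0) : ℤ) = 0 ↔ a = b := by
  cases a <;> cases b <;> simp

theorem abs_indicator_sub_le_one (a b : Bool) :
    |((if a then 1 else 0) - (if b then 1 else 0) : ℤ)| ≤ 1 := by
  cases a <;> cases b <;> simp

theorem palindrome_characteristic_polynomial_general (n : ℕ) (x : ℕ → Bool) :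
    (2 : ℤ) ^ (n / 2) ∣
        (∑ i ∈ Finset.Icc 1 (n / 2), (if x i then (1 : ℤ) else 0) * 2 ^ (i - 1)
          - ∑ i ∈ Finset.Icc ((n + 1) / 2) n, (if x i then (1 : ℤ) else 0) * 2 ^ (n - i))
      ↔ ∀ i ∈ Finset.Icc 1 n, x i = x (n + 1 - i) := by
  rw [show (n + 1) / 2 = n - n / 2 by omega, sum_Icc_one_mul_two_pow_sub_one,
    sum_Icc_sub_mul_two_pow_sub _ (n.div_le_self 2), Finset.sum_range_succ, ← sub_sub,
    ← Finset.sum_sub_distrib, dvd_sub_left (dvd_mul_left _ _)]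
  simp_rw [← sub_mul]
  rw [two_pow_dvd_sum_signed_digits_iff fun j _ => abs_indicator_sub_le_one _ _,
    ← forall_lt_half_eq_iff_palindrome]
  simp only [indicator_sub_eq_zero_iff]

/-- The linear polynomial `Σ_{i=1}^{⌊n/2⌋} x_i·2^{i-1} − Σ_{i=⌈n/2⌉}^{n} x_i·2^{n-i}`
is a characteristic polynomial of `Palindrome_n` over `ℤ_{2^{⌊n/2⌋}}` (for `n ≥ 2`):
its value on a Boolean input is `≡ 0 (mod 2^{⌊n/2⌋})` iff `x_i = x_{n+1-i}` for all
`i ∈ {1,…,n}`. (Variables are indexed `1,…,n`.) -/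
theorem palindrome_characteristic_polynomial (n : ℕ) (hn : 2 ≤ n) (x : ℕ → Bool) :
    (2 : ℤ) ^ (n / 2) ∣
        (∑ i ∈ Finset.Icc 1 (n / 2), (if x i then (1 : ℤ) else 0) * 2 ^ (i - 1)
          - ∑ i ∈ Finset.Icc ((n + 1) / 2) n, (if x i then (1 : ℤ) else 0) * 2 ^ (n - i))
      ↔ ∀ i ∈ Finset.Icc 1 n, x i = x (n + 1 - i) :=
  palindrome_characteristic_polynomial_general n x
end

section
/- Let n ≥ 1 and let x = (x_{ij})_{1 ≤ i,j ≤ n} ∈ {0,1}^{n×n}. Then Σ_{i=1}^n Σ_{j=1}^n x_{ij}·((n+1)^{i-1} + (n+1)^{n+j-1}) − Σ_{i=1}^{2n} (n+1)^{i-1} ≡ 0 (mod (n+1)^{2n}) if and only if x is a permutation matrix, i.e., every row of x contains exactly one 1 and every column of x contains exactly one 1. (That is, this linear polynomial is a characteristic polynomial of the function PERM_n over Z_{(n+1)^{2n}}.) -/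
/-!
With `b = n + 1`, the polynomial equals `∑ᵢ (rᵢ - 1) bⁱ + ∑ⱼ (cⱼ - 1) bⁿ⁺ʲ`, where `rᵢ` and
`cⱼ` count the ones in row `i` and column `j`. This is a base-`b` expansion of length `2n` whose
digits lie in `[-1, n - 1]`, so strictly inside `(-b, b)`; such an expansion is divisible by
`b ^ (2n)` only if every digit vanishes, i.e. every row and column contains exactly one `1`.
-/

open Finset

namespace Int

theorem pow_dvd_sum_mul_pow_iff {b : ℤ} :
    ∀ {m : ℕ} (d : Fin m → ℤ), (∀ k, |d k| < |b|) →
      (b ^ m ∣ ∑ k, d k * b ^ (k : ℕ) ↔ ∀ k, d k = 0)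
  | 0, _, _ => by simp
  | m + 1, d, hd => by
    have hb : b ≠ 0 := abs_pos.mp ((abs_nonneg _).trans_lt (hd 0))
    have hsum : ∑ k : Fin (m + 1), d k * b ^ (k : ℕ) =
        d 0 + b * ∑ k : Fin m, d k.succ * b ^ (k : ℕ) := by
      simp only [Fin.sum_univ_succ, Fin.val_zero, pow_zero, mul_one, Fin.val_succ, pow_succ,
        mul_sum]
      congr 1
      exact sum_congr rfl fun k _ => by ring
    rw [hsum, Fin.forall_fin_succ, ← pow_dvd_sum_mul_pow_iff _ fun k => hd k.succ]
    constructor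
    · intro h
      have hd0 : d 0 = 0 := by
        refine eq_zero_of_abs_lt_dvd ((abs_dvd _ _).mpr ?_) (hd 0)
        exact (dvd_add_left (dvd_mul_right b _)).mp ((dvd_pow_self b m.succ_ne_zero).trans h)
      rw [hd0, zero_add, pow_succ', mul_dvd_mul_iff_left hb] at h
      exact ⟨hd0, h⟩
    · rintro ⟨hd0, h⟩
      rw [hd0, zero_add, pow_succ']
      exact mul_dvd_mul_left b h

end Int

theorem abs_natCast_sub_one_lt {a n : ℕ} (hn : 0 < n) (ha : a ≤ n) :
    |(a : ℤ) - 1| < n + 1 := by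
  rw [abs_lt]
  omega

section BoolMatrix

variable {n : ℕ} (x : Fin n → Fin n → Bool)

def rowCount (i : Fin n) : ℕ := #{j | x i j}

def colCount (j : Fin n) : ℕ := #{i | x i j}

def countDigits : Fin (n + n) → ℤ :=
  Fin.append (fun i => (rowCount x i : ℤ) - 1) (fun j => (colCount x j : ℤ) - 1)

theorem sum_ite_mul_sub_sum_pow_eq (b : ℤ) :
    (∑ i : Fin n, ∑ j : Fin n,
        (if x i j then (1 : ℤ) else 0) * (b ^ (i : ℕ) + b ^ (n + (j : ℕ))))
        - ∑ k ∈ range (n + n), b ^ k =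
      ∑ k : Fin (n + n), countDigits x k * b ^ (k : ℕ) := by
  have hrow : ∀ i, (rowCount x i : ℤ) = ∑ j, if x i j then 1 else 0 := fun i => by
    simp [rowCount, sum_boole]
  have hcol : ∀ j, (colCount x j : ℤ) = ∑ i, if x i j then 1 else 0 := fun j => by
    simp [colCount, sum_boole]
  rw [Fin.sum_univ_add, sum_range_add, ← Fin.sum_univ_eq_sum_range,
    ← Fin.sum_univ_eq_sum_range (fun k => b ^ (n + k))]
  simp only [countDigits, Fin.append_left, Fin.append_right, Fin.val_castAdd, Fin.val_natAdd,
    sub_mul, one_mul, sum_sub_distrib, hrow, hcol, sum_mul, mul_add, sum_add_distrib]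
  rw [sum_comm (f := fun i j => (if x i j then (1 : ℤ) else 0) * b ^ (n + (j : ℕ)))]
  ring

theorem rowCount_le (i : Fin n) : rowCount x i ≤ n :=
  (card_filter_le _ _).trans (card_fin n).le

theorem colCount_le (j : Fin n) : colCount x j ≤ n :=
  (card_filter_le _ _).trans (card_fin n).le

theorem abs_countDigits_lt (k : Fin (n + n)) : |countDigits x k| < |(n : ℤ) + 1| := by
  rw [abs_of_pos (by positivity : (0 : ℤ) < n + 1)]
  revert k
  rw [Fin.forall_fin_add]
  refine ⟨fun i => ?_, fun j => ?_⟩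
  · simpa only [countDigits, Fin.append_left] using abs_natCast_sub_one_lt i.pos (rowCount_le x i)
  · simpa only [countDigits, Fin.append_right] using abs_natCast_sub_one_lt j.pos (colCount_le x j)

theorem rowCount_eq_one_iff (i : Fin n) : rowCount x i = 1 ↔ ∃! j, x i j = true := by
  simp [rowCount, card_eq_one_iff_existsUnique]

theorem colCount_eq_one_iff (j : Fin n) : colCount x j = 1 ↔ ∃! i, x i j = true := by
  simp [colCount, card_eq_one_iff_existsUnique]

theorem countDigits_eq_zero_iff :
    (∀ k, countDigits x k = 0) ↔
      (∀ i, ∃! j, x i j = true) ∧ (∀ j, ∃! i, x i j = true) := by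
  simp only [Fin.forall_fin_add, countDigits, Fin.append_left, Fin.append_right, sub_eq_zero,
    Nat.cast_eq_one, rowCount_eq_one_iff, colCount_eq_one_iff]

end BoolMatrix

theorem perm_characteristic_polynomial_general (n : ℕ) (x : Fin n → Fin n → Bool) :
    ((n : ℤ) + 1) ^ (2 * n) ∣
        (∑ i : Fin n, ∑ j : Fin n,
            (if x i j then (1 : ℤ) else 0) *
              (((n : ℤ) + 1) ^ (i : ℕ) + ((n : ℤ) + 1) ^ (n + (j : ℕ)))
          - ∑ i ∈ Finset.range (2 * n), ((n : ℤ) + 1) ^ i)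
      ↔ ((∀ i : Fin n, ∃! j : Fin n, x i j = true) ∧
          (∀ j : Fin n, ∃! i : Fin n, x i j = true)) := by
  rw [two_mul, sum_ite_mul_sub_sum_pow_eq,
    Int.pow_dvd_sum_mul_pow_iff _ (abs_countDigits_lt x), countDigits_eq_zero_iff]

/-- The linear polynomial
`Σ_{i=1}^n Σ_{j=1}^n x_{ij}·((n+1)^{i-1} + (n+1)^{n+j-1}) − Σ_{i=1}^{2n} (n+1)^{i-1}`
is a characteristic polynomial of `PERM_n` over `ℤ_{(n+1)^{2n}}` (for `n ≥ 1`):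
its value on a Boolean matrix is `≡ 0 (mod (n+1)^{2n})` iff the matrix is a
permutation matrix (each row and each column contains exactly one `1`). -/
theorem perm_characteristic_polynomial (n : ℕ) (hn : 1 ≤ n) (x : Fin n → Fin n → Bool) :
    ((n : ℤ) + 1) ^ (2 * n) ∣
        (∑ i : Fin n, ∑ j : Fin n,
            (if x i j then (1 : ℤ) else 0) *
              (((n : ℤ) + 1) ^ (i : ℕ) + ((n : ℤ) + 1) ^ (n + (j : ℕ)))
          - ∑ i ∈ Finset.range (2 * n), ((n : ℤ) + 1) ^ i)
      ↔ ((∀ i : Fin n, ∃! j : Fin n, x i j = true) ∧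
          (∀ j : Fin n, ∃! i : Fin n, x i j = true)) :=
  perm_characteristic_polynomial_general n x
end

section
/- Let f : {0,1}^n → {0,1} be a Boolean function and suppose ¬f is written as a disjunction K_1 ∨ … ∨ K_l of conjunctions of literals (a sum-of-products/DNF representation of ¬f). For each i let K̃_i denote the integer polynomial obtained from K_i by replacing each conjunction by the product of its literals, where a negated literal ¬x_j is replaced by (1 − x_j). If l < 2^n, then the polynomial g = K̃_1 + … + K̃_l satisfies: for all σ ∈ {0,1}^n, g(σ) ≡ 0 (mod 2^n) iff f(σ) = 1; i.e., g is a characteristic polynomial of f over Z_{2^n}. -/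
/-!
Each `K̃_i` takes the value `1` at `σ` if `σ` satisfies `K_i` and `0` otherwise, so `g(σ)` is the
number of terms of the DNF satisfied by `σ`, a natural number between `0` and `l < 2^n`. It is
divisible by `2^n` iff it is `0`, i.e. iff `σ` satisfies no term, i.e. iff `f(σ) = 1`.
-/

open Finset

lemma boolLiteral_eq_ite {R : Type*} [Ring R] (x b : Bool) :
    (if b then (if x then (1 : R) else 0) else 1 - (if x then (1 : R) else 0)) =
      if x = b then 1 else 0 := by
  cases b <;> cases x <;> simp

lemma sum_prod_boolLiteral_eq_card {ι V R : Type*} [Fintype ι] [CommRing R]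
    (S : ι → Finset (V × Bool)) (σ : V → Bool) :
    ∑ i, ∏ p ∈ S i,
        (if p.2 then (if σ p.1 then (1 : R) else 0) else 1 - (if σ p.1 then (1 : R) else 0)) =
      (#{i | ∀ p ∈ S i, σ p.1 = p.2} : R) := by
  simp only [boolLiteral_eq_ite, prod_boole, sum_boole]

lemma Nat.dvd_iff_eq_zero_of_lt {m k : ℕ} (hk : k < m) : m ∣ k ↔ k = 0 :=
  ⟨fun h => Nat.eq_zero_of_dvd_of_lt h hk, fun h => h ▸ dvd_zero m⟩

/-- If `¬f` is given by a DNF `K₁ ∨ … ∨ K_l` with `l < 2^n` — each term `K_i` is a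
conjunction of literals, encoded as a finite set `S i` of pairs `(variable, polarity)`
so that `K_i(σ) = 1` iff `σ v = b` for every `(v, b) ∈ S i` — then the polynomial
`g = K̃₁ + … + K̃_l` (where in `K̃_i` each literal `x_j` contributes the factor `x_j`
and each `¬x_j` the factor `1 − x_j`) is a characteristic polynomial of `f` over
`ℤ_{2^n}`: for all `σ`, `g(σ) ≡ 0 (mod 2^n)` iff `f(σ) = 1`. -/
theorem dnf_characteristic_polynomial (n l : ℕ) (hl : l < 2 ^ n)
    (f : (Fin n → Bool) → Bool) (S : Fin l → Finset (Fin n × Bool))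
    (hdnf : ∀ σ : Fin n → Bool,
      f σ = false ↔ ∃ i : Fin l, ∀ p ∈ S i, σ p.1 = p.2) :
    ∀ σ : Fin n → Bool,
      ((2 : ℤ) ^ n ∣
          ∑ i : Fin l, ∏ p ∈ S i,
            (if p.2 then (if σ p.1 then (1 : ℤ) else 0)
             else 1 - (if σ p.1 then (1 : ℤ) else 0)))
        ↔ f σ = true := by
  intro σ
  rw [sum_prod_boolLiteral_eq_card, ← Nat.cast_ofNat, ← Nat.cast_pow, Int.natCast_dvd_natCast,
    Nat.dvd_iff_eq_zero_of_lt ((card_le_univ _).trans_lt (by simpa using hl))]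
  rw [← Bool.not_eq_false, hdnf σ, not_exists]
  simp only [card_eq_zero, filter_eq_empty_iff, mem_univ, true_implies]
end
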